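/- arXiv:2409.09569 — 4 statements merged into one kernel-verified Lean document; each statement's English description precedes it below -/
import Mathlib

section
/- Let (Ω, 𝒜) be a measurable space and let p_b, p_1, …, p_k (k ≥ 2) be probability measures on Ω, where p_b is the image distribution generated from the base prompt b and p_j is the image distribution generated from the prompt with attribute a_j attached. Let T, L > 0, δ ≥ 0, ε > 0 and v_1, …, v_k > 0 with ε < (min_i v_i)/2. Suppose: (i) KL(p_b ‖ p_1) ≤ T·L²·δ² (the Girsanov bound for a denoising-score function that is L-Lipschitz in the prompt embedding, where δ = ‖e_P(b) − e_P(a_1+b)‖ is the distance between the prompt embeddings); (ii) δ ≤ ε/(√T·L) (the embedding of b is ε/(√T L)-close to a_1); and (iii) TV(p_i, p_j) ≥ 1 − ε for all distinct i, j ∈ {1,…,k} (distinct categories of identifiers). Then TV(p_b, p_1) ≤ ε, and for every j ≠ 1 one has TV(p_b, p_j) ≥ 1 − 2ε > 1 − min_i v_i; in particular the model is not representationally balanced with constants (v_i). -/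
open MeasureTheory
open scoped ENNReal

/-- Total variation distance between two measures:
the supremum over measurable sets `s` of `|μ s - ν s|`. -/
noncomputable def tvDist {Ω : Type*} [MeasurableSpace Ω] (μ ν : Measure Ω) : ℝ :=
  ⨆ s : {s : Set Ω // MeasurableSet s}, |(μ s.1).toReal - (ν s.1).toReal|

/- Kullback–Leibler divergence between two measures, valued in `ℝ≥0∞`:
`∫ log (dμ/dν) dμ` when `μ ≪ ν` and the log-likelihood ratio is integrable, `∞` otherwise. -/
open Classical in
noncomputable def klDiv {Ω : Type*} [MeasurableSpace Ω] (μ ν : Measure Ω) : ℝ≥0∞ :=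
  if μ ≪ ν ∧ Integrable (llr μ ν) μ then ENNReal.ofReal (∫ x, llr μ ν x ∂μ) else ⊤

/-!
Pinsker's inequality `2 TV(μ, ν)² ≤ KL(μ ‖ ν)` turns the KL bound into
`TV(p_b, p_1) ≤ √T L δ ≤ ε`. The triangle inequality and the separation `TV(p_1, p_j) ≥ 1 - ε`
then give `TV(p_b, p_j) ≥ 1 - 2ε > 1 - v_j` for `j ≠ 1`, so balance fails at such a `j`.

Pinsker's inequality comes from the pointwise bound `3 (x - 1)² ≤ (2x + 4) klFun x` at
`x = dμ/dν`: by AM–GM it gives `|x - 1| ≤ t (x + 2) / 3 + klFun x / (2t)`, and integrating against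
`ν` with `t = ‖dμ/dν - 1‖₁ / 2` yields `‖dμ/dν - 1‖₁² ≤ 2 KL(μ ‖ ν)`, while `TV ≤ ‖dμ/dν - 1‖₁ / 2`.
-/

open Set

theorem isMinOn_of_hasDerivAt_of_sign {f f' : ℝ → ℝ} {a c : ℝ} (hac : a < c)
    (hf : ∀ x, a < x → HasDerivAt f (f' x) x) (hf' : ∀ x, a < x → 0 ≤ (x - c) * f' x) :
    IsMinOn f (Ioi a) c := by
  intro x hx
  have hcont : ContinuousOn f (Ioi a) := fun y hy => (hf y hy).continuousAt.continuousWithinAt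
  have hderiv : ∀ {u v}, a < u → ∀ y ∈ interior (Icc u v),
      HasDerivWithinAt f (f' y) (interior (Icc u v)) y := fun hu y hy =>
    (hf y (hu.trans_le (interior_subset hy).1)).hasDerivWithinAt
  rcases le_total c x with hcx | hxc
  · refine monotoneOn_of_hasDerivWithinAt_nonneg (convex_Icc c x)
      (hcont.mono fun y hy => hac.trans_le hy.1) (hderiv hac) (fun y hy => ?_)
      ⟨le_rfl, hcx⟩ ⟨hcx, le_rfl⟩ hcx
    rw [interior_Icc] at hy
    exact nonneg_of_mul_nonneg_right (hf' y (hac.trans hy.1)) (sub_pos.2 hy.1)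
  · refine antitoneOn_of_hasDerivWithinAt_nonpos (convex_Icc x c)
      (hcont.mono fun y hy => lt_of_lt_of_le hx hy.1) (hderiv hx) (fun y hy => ?_)
      ⟨le_rfl, hxc⟩ ⟨hxc, le_rfl⟩ hxc
    rw [interior_Icc] at hy
    exact nonpos_of_mul_nonneg_right (hf' y (lt_trans hx hy.1)) (sub_neg.2 hy.2)

section KLFun

open InformationTheory

theorem hasDerivAt_log_sub_div {x : ℝ} (hx : 0 < x) :
    HasDerivAt (fun y => Real.log y - (5 * y ^ 2 - 4 * y - 1) / (2 * y ^ 2 + 4 * y))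
      (4 * (x - 1) ^ 3 / (2 * x ^ 2 + 4 * x) ^ 2) x := by
  have hnum : HasDerivAt (fun y : ℝ => 5 * y ^ 2 - 4 * y - 1) (10 * x - 4) x :=
    ((((hasDerivAt_pow 2 x).const_mul 5).sub ((hasDerivAt_id' x).const_mul 4)).sub_const
      1).congr_deriv (by ring)
  have hden : HasDerivAt (fun y : ℝ => 2 * y ^ 2 + 4 * y) (4 * x + 4) x :=
    (((hasDerivAt_pow 2 x).const_mul 2).add ((hasDerivAt_id' x).const_mul 4)).congr_deriv
      (by ring)
  have hden_pos : 0 < 2 * x ^ 2 + 4 * x := by positivity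
  refine ((Real.hasDerivAt_log hx.ne').sub (hnum.div hden hden_pos.ne')).congr_deriv ?_
  field_simp
  ring

theorem three_mul_sq_sub_one_le_mul_klFun {x : ℝ} (hx : 0 ≤ x) :
    3 * (x - 1) ^ 2 ≤ (2 * x + 4) * klFun x := by
  rcases hx.eq_or_lt with rfl | hx
  · norm_num [klFun_zero]
  -- For `x > 0` the claim is `(5x² - 4x - 1) / (2x² + 4x) ≤ log x`, with equality at `x = 1`.
  have hmin := isMinOn_of_hasDerivAt_of_sign zero_lt_one (fun y hy => hasDerivAt_log_sub_div hy)
    (fun y _ => by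
      rw [show (y - 1) * (4 * (y - 1) ^ 3 / (2 * y ^ 2 + 4 * y) ^ 2)
          = 4 * (y - 1) ^ 4 / (2 * y ^ 2 + 4 * y) ^ 2 by ring]
      positivity) (mem_Ioi.2 hx)
  norm_num at hmin
  rw [div_le_iff₀ (by positivity)] at hmin
  rw [klFun_apply]
  nlinarith

theorem abs_sub_one_le_add_klFun_div {x t : ℝ} (hx : 0 ≤ x) (ht : 0 < t) :
    |x - 1| ≤ t * (x + 2) / 3 + klFun x / (2 * t) := by
  have hkl := three_mul_sq_sub_one_le_mul_klFun hx
  have hprod : 4 * (t * (x + 2) / 3) * (klFun x / (2 * t)) = (2 * x + 4) * klFun x / 3 := by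
    field_simp
    ring
  have hsum_nonneg : 0 ≤ t * (x + 2) / 3 + klFun x / (2 * t) := by
    have := klFun_nonneg hx
    positivity
  refine abs_le_of_sq_le_sq ?_ hsum_nonneg
  nlinarith [sq_nonneg (t * (x + 2) / 3 - klFun x / (2 * t))]

end KLFun

section TotalVariation

variable {Ω : Type*} [MeasurableSpace Ω] {μ ν ρ : Measure Ω}

theorem tvDist_nonneg (μ ν : Measure Ω) : 0 ≤ tvDist μ ν :=
  Real.iSup_nonneg fun _ => abs_nonneg _

theorem tvDist_comm (μ ν : Measure Ω) : tvDist μ ν = tvDist ν μ := by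
  simp_rw [tvDist, abs_sub_comm]

theorem tvDist_le {c : ℝ} (h : ∀ s, MeasurableSet s → |μ.real s - ν.real s| ≤ c) :
    tvDist μ ν ≤ c :=
  haveI : Nonempty {s : Set Ω // MeasurableSet s} := ⟨⟨∅, .empty⟩⟩
  ciSup_le fun s => h s.1 s.2

theorem abs_measureReal_sub_le_tvDist [IsFiniteMeasure μ] [IsFiniteMeasure ν] {s : Set Ω}
    (hs : MeasurableSet s) : |μ.real s - ν.real s| ≤ tvDist μ ν := by
  refine le_ciSup (f := fun s : {s : Set Ω // MeasurableSet s} => |μ.real s - ν.real s|)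
    ⟨μ.real univ + ν.real univ, ?_⟩ ⟨s, hs⟩
  rintro _ ⟨t, rfl⟩
  have hμ := measureReal_mono (μ := μ) (subset_univ t.1)
  have hν := measureReal_mono (μ := ν) (subset_univ t.1)
  exact abs_le.2 ⟨by linarith [measureReal_nonneg (μ := μ) (s := t.1)],
    by linarith [measureReal_nonneg (μ := ν) (s := t.1)]⟩

theorem tvDist_triangle [IsFiniteMeasure μ] [IsFiniteMeasure ν] [IsFiniteMeasure ρ] :
    tvDist μ ρ ≤ tvDist μ ν + tvDist ν ρ :=
  tvDist_le fun _ hs => (abs_sub_le _ _ _).trans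
    (add_le_add (abs_measureReal_sub_le_tvDist hs) (abs_measureReal_sub_le_tvDist hs))

theorem abs_setIntegral_le_half_integral_abs {f : Ω → ℝ} (hf : Integrable f μ)
    (hf0 : ∫ x, f x ∂μ = 0) {s : Set Ω} (hs : MeasurableSet s) :
    |∫ x in s, f x ∂μ| ≤ (∫ x, |f x| ∂μ) / 2 := by
  have hsplit : ∫ x in s, f x ∂μ + ∫ x in sᶜ, f x ∂μ = 0 := by
    rw [integral_add_compl hs hf, hf0]
  have habs_split : ∫ x in s, |f x| ∂μ + ∫ x in sᶜ, |f x| ∂μ = ∫ x, |f x| ∂μ :=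
    integral_add_compl hs hf.abs
  have hs_le := abs_integral_le_integral_abs (f := f) (μ := μ.restrict s)
  have hsc_le := abs_integral_le_integral_abs (f := f) (μ := μ.restrict sᶜ)
  rw [eq_neg_of_add_eq_zero_right hsplit, abs_neg] at hsc_le
  linarith

theorem tvDist_le_half_integral_abs_rnDeriv_sub_one [IsProbabilityMeasure μ]
    [IsProbabilityMeasure ν] (hμν : μ ≪ ν) :
    tvDist μ ν ≤ (∫ x, |(μ.rnDeriv ν x).toReal - 1| ∂ν) / 2 := by
  have hg : Integrable (fun x => (μ.rnDeriv ν x).toReal - 1) ν :=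
    Measure.integrable_toReal_rnDeriv.sub (integrable_const 1)
  have hg0 : ∫ x, ((μ.rnDeriv ν x).toReal - 1) ∂ν = 0 := by
    simp [integral_sub Measure.integrable_toReal_rnDeriv (integrable_const 1),
      Measure.integral_toReal_rnDeriv hμν]
  refine tvDist_le fun s hs => ?_
  have hset : μ.real s - ν.real s = ∫ x in s, ((μ.rnDeriv ν x).toReal - 1) ∂ν := by
    simp [integral_sub Measure.integrable_toReal_rnDeriv.integrableOn
      (integrable_const 1).integrableOn, Measure.setIntegral_toReal_rnDeriv hμν]
  rw [hset]
  exact abs_setIntegral_le_half_integral_abs hg hg0 hs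

end TotalVariation

section Pinsker

open InformationTheory

variable {Ω : Type*} [MeasurableSpace Ω] {μ ν : Measure Ω}

theorem sq_integral_abs_sub_one_le_two_mul_integral_klFun [IsProbabilityMeasure ν] {g : Ω → ℝ}
    (hg0 : ∀ x, 0 ≤ g x) (hg : Integrable g ν) (hg1 : ∫ x, g x ∂ν = 1)
    (hkl : Integrable (fun x => klFun (g x)) ν) :
    (∫ x, |g x - 1| ∂ν) ^ 2 ≤ 2 * ∫ x, klFun (g x) ∂ν := by
  set A := ∫ x, |g x - 1| ∂ν
  set K := ∫ x, klFun (g x) ∂ν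
  have hK : 0 ≤ K := integral_nonneg fun x => klFun_nonneg (hg0 x)
  have hA0 : 0 ≤ A := integral_nonneg fun x => abs_nonneg (g x - 1)
  rcases hA0.eq_or_lt with hA | hA
  · rw [← hA]
    linarith
  have hlin : Integrable (fun x => A / 2 * (g x + 2) / 3) ν :=
    ((hg.add (integrable_const 2)).const_mul _).div_const 3
  have hbound : A ≤ A / 2 + K / A :=
    calc A ≤ ∫ x, (A / 2 * (g x + 2) / 3 + klFun (g x) / (2 * (A / 2))) ∂ν :=
          integral_mono (hg.sub (integrable_const 1)).abs (hlin.add (hkl.div_const _))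
            fun x => abs_sub_one_le_add_klFun_div (hg0 x) (half_pos hA)
      _ = A / 2 + K / A := by
          rw [integral_add hlin (hkl.div_const _), integral_div, integral_const_mul,
            integral_add hg (integrable_const 2), integral_div, hg1]
          simp only [integral_const, probReal_univ, smul_eq_mul, one_mul]
          field_simp
          ring
  have := mul_le_mul_of_nonneg_left hbound hA.le
  rw [mul_add, mul_div_cancel₀ _ hA.ne'] at this
  nlinarith

theorem ofReal_two_mul_sq_tvDist_le_klDiv [IsProbabilityMeasure μ] [IsProbabilityMeasure ν] :
    ENNReal.ofReal (2 * tvDist μ ν ^ 2) ≤ InformationTheory.klDiv μ ν := by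
  by_cases htop : InformationTheory.klDiv μ ν = ⊤
  · simp [htop]
  obtain ⟨hμν, hint⟩ := klDiv_ne_top_iff.1 htop
  rw [ENNReal.ofReal_le_iff_le_toReal htop, toReal_klDiv_eq_integral_klFun hμν]
  have htv := tvDist_le_half_integral_abs_rnDeriv_sub_one hμν
  have hL1 := sq_integral_abs_sub_one_le_two_mul_integral_klFun (fun _ => ENNReal.toReal_nonneg)
    Measure.integrable_toReal_rnDeriv (by simp [Measure.integral_toReal_rnDeriv hμν])
    ((integrable_klFun_rnDeriv_iff hμν).2 hint)
  nlinarith [tvDist_nonneg μ ν]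

end Pinsker

section KLDiv

variable {Ω : Type*} [MeasurableSpace Ω] {μ ν : Measure Ω}

theorem klDiv_eq_informationTheory_klDiv (h : μ univ = ν univ) :
    klDiv μ ν = InformationTheory.klDiv μ ν := by
  rw [klDiv, InformationTheory.klDiv_def, measureReal_def, measureReal_def, h, add_sub_cancel_right]

theorem tvDist_le_of_klDiv_le_sq [IsProbabilityMeasure μ] [IsProbabilityMeasure ν] {c : ℝ}
    (hc : 0 ≤ c) (h : klDiv μ ν ≤ ENNReal.ofReal (c ^ 2)) : tvDist μ ν ≤ c := by
  rw [klDiv_eq_informationTheory_klDiv (by simp)] at h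
  have hpinsker := ofReal_two_mul_sq_tvDist_le_klDiv.trans h
  rw [ENNReal.ofReal_le_ofReal_iff (sq_nonneg c)] at hpinsker
  nlinarith [tvDist_nonneg μ ν]

end KLDiv

/-- `p j` is the generation for the prompt carrying attribute `a_(j+1)`: index `0` is `a_1`. -/
theorem biased_embeddings_biased_generations {Ω : Type*} [MeasurableSpace Ω]
    (k : ℕ) (hk : 2 ≤ k)
    (pb : Measure Ω) (p : Fin k → Measure Ω)
    [IsProbabilityMeasure pb] [∀ j, IsProbabilityMeasure (p j)]
    (T L δ ε : ℝ) (v : Fin k → ℝ)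
    (hT : 0 < T) (hL : 0 < L) (hδ : 0 ≤ δ)
    (hεv : ε < (⨅ i, v i) / 2)
    (hKL : klDiv pb (p ⟨0, by omega⟩) ≤ ENNReal.ofReal (T * L ^ 2 * δ ^ 2))
    (hclose : δ ≤ ε / (Real.sqrt T * L))
    (hdistinct : ∀ i j : Fin k, i ≠ j → 1 - ε ≤ tvDist (p i) (p j)) :
    tvDist pb (p ⟨0, by omega⟩) ≤ ε ∧
    (∀ j : Fin k, j ≠ ⟨0, by omega⟩ →
      1 - 2 * ε ≤ tvDist pb (p j) ∧ 1 - 2 * ε > 1 - ⨅ i, v i) ∧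
    ¬ (∀ i : Fin k, tvDist pb (p i) ≤ 1 - v i) := by
  set i₀ : Fin k := ⟨0, by omega⟩
  have hscale : 0 < Real.sqrt T * L := by positivity
  have hKL' : klDiv pb (p i₀) ≤ ENNReal.ofReal ((Real.sqrt T * L * δ) ^ 2) := by
    rwa [mul_pow, mul_pow, Real.sq_sqrt hT.le]
  have hnear : tvDist pb (p i₀) ≤ ε :=
    (tvDist_le_of_klDiv_le_sq (by positivity) hKL').trans
      (by rw [mul_comm]; exact (le_div_iff₀ hscale).1 hclose)
  have hfar : ∀ j, j ≠ i₀ → 1 - 2 * ε ≤ tvDist pb (p j) := fun j hj => by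
    have := hdistinct i₀ j (Ne.symm hj)
    have := tvDist_triangle (μ := p i₀) (ν := pb) (ρ := p j)
    rw [tvDist_comm (p i₀) pb] at this
    linarith
  have hinf : ⨅ i, v i ≤ v ⟨1, by omega⟩ := ciInf_le (finite_range v).bddBelow _
  refine ⟨hnear, fun j hj => ⟨hfar j hj, by linarith⟩, fun hbalanced => ?_⟩
  have := hfar ⟨1, by omega⟩ (by simp [i₀, Fin.ext_iff])
  have := hbalanced ⟨1, by omega⟩
  linarith
end

section
/- Let I be a measurable space, let μ_1, …, μ_k be probability measures on I, and let s, s* : I → [0, 1] be measurable with ∫ s* dμ_ℓ = s̄ and |∫ (s* − s) dμ_ℓ| ≤ α for every ℓ ∈ {1,…,k}. Let p_1,…,p_k ≥ 0 and p'_1,…,p'_k ≥ 0 be two weight vectors each summing to 1, and set μ = Σ_ℓ p_ℓ·μ_ℓ and μ' = Σ_ℓ p'_ℓ·μ_ℓ. Then |∫ s dμ − ∫ s dμ'| ≤ 2α; that is, the alignment scores assigned to the two models differ by at most 2α irrespective of the mixing probabilities. -/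
open MeasureTheory

/-
Multiaccuracy and equal true averages place every per-attribute score `∫ s ∂μ ℓ` in the interval
`[sbar - α, sbar + α]`. The score of a mixture is the corresponding convex combination of these,
so it stays in the same interval, and two points of an interval of length `2α` are at most `2α`
apart.
-/

theorem Measurable.integrable_of_mem_Icc {I : Type*} [MeasurableSpace I] {μ : Measure I}
    [IsFiniteMeasure μ] {f : I → ℝ} {a b : ℝ} (hf : Measurable f) (hab : ∀ i, f i ∈ Set.Icc a b) :
    Integrable f μ :=
  Integrable.of_bound hf.aestronglyMeasurable _ <| .of_forall fun i =>
    abs_le_max_abs_abs (hab i).1 (hab i).2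

theorem integral_sum_ofReal_smul_measure {ι I E : Type*} [Fintype ι] [MeasurableSpace I]
    [NormedAddCommGroup E] [NormedSpace ℝ E] {μ : ι → Measure I} {f : I → E} {p : ι → ℝ}
    (hp : ∀ ℓ, 0 ≤ p ℓ) (hf : ∀ ℓ, Integrable f (μ ℓ)) :
    ∫ i, f i ∂(∑ ℓ, ENNReal.ofReal (p ℓ) • μ ℓ) = ∑ ℓ, p ℓ • ∫ i, f i ∂(μ ℓ) := by
  rw [integral_finsetSum_measure fun ℓ _ => (hf ℓ).smul_measure ENNReal.ofReal_ne_top]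
  refine Finset.sum_congr rfl fun ℓ _ => ?_
  rw [integral_smul_measure, ENNReal.toReal_ofReal (hp ℓ)]

theorem Convex.integral_mixture_mem {ι I E : Type*} [Fintype ι] [MeasurableSpace I]
    [NormedAddCommGroup E] [NormedSpace ℝ E] {C : Set E} (hC : Convex ℝ C)
    {μ : ι → Measure I} {f : I → E} {p : ι → ℝ} (hp : ∀ ℓ, 0 ≤ p ℓ) (hp1 : ∑ ℓ, p ℓ = 1)
    (hf : ∀ ℓ, Integrable f (μ ℓ)) (hfC : ∀ ℓ, ∫ i, f i ∂(μ ℓ) ∈ C) :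
    ∫ i, f i ∂(∑ ℓ, ENNReal.ofReal (p ℓ) • μ ℓ) ∈ C := by
  rw [integral_sum_ofReal_smul_measure hp hf]
  exact hC.sum_mem (fun ℓ _ => hp ℓ) hp1 fun ℓ _ => hfC ℓ

theorem integral_mem_Icc_of_abs_integral_sub_le {I : Type*} [MeasurableSpace I] {μ : Measure I}
    {f g : I → ℝ} {c α : ℝ} (hf : Integrable f μ) (hg : Integrable g μ)
    (hgc : ∫ i, g i ∂μ = c) (hfg : |∫ i, (g i - f i) ∂μ| ≤ α) :
    ∫ i, f i ∂μ ∈ Set.Icc (c - α) (c + α) := by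
  rw [integral_sub hg hf, hgc, abs_le] at hfg
  constructor <;> linarith [hfg.1, hfg.2]

/-- **Corollary to Theorem 5.2.** Under multiaccuracy of the auditor `s` and equal
average true alignment `sbar` across the attribute image-distributions `μ ℓ`, two
models that mix over the attributes with arbitrary (possibly different) weight
vectors `p` and `p'` receive alignment scores within `2α` of each other. -/
theorem multiaccurate_score_stable_two_models {I : Type*} [MeasurableSpace I]
    (k : ℕ) (μ : Fin k → Measure I) [∀ ℓ, IsProbabilityMeasure (μ ℓ)]
    (s sStar : I → ℝ) (hs : Measurable s) (hsStar : Measurable sStar)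
    (hs01 : ∀ i, s i ∈ Set.Icc (0 : ℝ) 1) (hsStar01 : ∀ i, sStar i ∈ Set.Icc (0 : ℝ) 1)
    (sbar α : ℝ)
    (htrue : ∀ ℓ, ∫ i, sStar i ∂(μ ℓ) = sbar)
    (hma : ∀ ℓ, |∫ i, (sStar i - s i) ∂(μ ℓ)| ≤ α)
    (p p' : Fin k → ℝ) (hp : ∀ ℓ, 0 ≤ p ℓ) (hp' : ∀ ℓ, 0 ≤ p' ℓ)
    (hpsum : ∑ ℓ, p ℓ = 1) (hpsum' : ∑ ℓ, p' ℓ = 1) :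
    |∫ i, s i ∂(∑ ℓ, ENNReal.ofReal (p ℓ) • μ ℓ) -
      ∫ i, s i ∂(∑ ℓ, ENNReal.ofReal (p' ℓ) • μ ℓ)| ≤ 2 * α := by
  have hsInt : ∀ ℓ, Integrable s (μ ℓ) := fun ℓ => hs.integrable_of_mem_Icc hs01
  have hscore : ∀ ℓ, ∫ i, s i ∂(μ ℓ) ∈ Set.Icc (sbar - α) (sbar + α) := fun ℓ =>
    integral_mem_Icc_of_abs_integral_sub_le (hsInt ℓ) (hsStar.integrable_of_mem_Icc hsStar01)
      (htrue ℓ) (hma ℓ)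
  have hdist := Real.dist_le_of_mem_Icc
    ((convex_Icc _ _).integral_mixture_mem hp hpsum hsInt hscore)
    ((convex_Icc _ _).integral_mixture_mem hp' hpsum' hsInt hscore)
  rw [Real.dist_eq] at hdist
  linarith
end

section
/- Let E be a real inner product space, let u ∈ E with ‖u‖ = 1 (the embedding e_P(b) of a prompt b), and let e : I → E be a measurable map from a measurable space I of images into the unit sphere of E (the image embedding e_I). Define the auditing function s(i) = (⟪u, e(i)⟫ + 1)/2 ∈ [0,1]. Let μ_1, μ_2 be probability measures on I and s* : I → [0,1] a measurable true alignment score. If |∫ (s* − s) dμ_ℓ| ≤ α for ℓ = 1, 2 (multiaccuracy) and ∫ s* dμ_1 = ∫ s* dμ_2, then |∫ ⟪u, e(i)⟫ dμ_1(i) − ∫ ⟪u, e(i)⟫ dμ_2(i)| ≤ 4α. -/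
open MeasureTheory
open scoped RealInnerProductSpace

/-!
Integrating the auditing function `(⟪u, e i⟫ + 1) / 2` is affine in the mean cosine
`∫ ⟪u, e i⟫ ∂μ`, so multiaccuracy pins each mean cosine to within `2α` of
`2 ∫ s* ∂μ - 1`. When the two mean true alignments agree, both mean cosines lie within
`2α` of the same number, hence within `4α` of each other.
-/

section

variable {I : Type*} [MeasurableSpace I] {μ : Measure I}

theorem integrable_inner_of_norm_le {E : Type*} [NormedAddCommGroup E] [InnerProductSpace ℝ E]
    [MeasurableSpace E] [BorelSpace E] [IsFiniteMeasure μ] (u : E) {e : I → E}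
    (he : Measurable e) {C : ℝ} (hC : ∀ i, ‖e i‖ ≤ C) :
    Integrable (fun i => ⟪u, e i⟫) μ := by
  refine .of_bound ((innerSL ℝ u).continuous.measurable.comp he).aestronglyMeasurable
    (‖u‖ * C) (.of_forall fun i => ?_)
  calc ‖⟪u, e i⟫‖ ≤ ‖u‖ * ‖e i‖ := norm_inner_le_norm u (e i)
    _ ≤ ‖u‖ * C := by gcongr; exact hC i

theorem integral_sub_half_add_one [IsProbabilityMeasure μ] {g f : I → ℝ}
    (hg : Integrable g μ) (hf : Integrable f μ) :
    ∫ i, (g i - (f i + 1) / 2) ∂μ = ∫ i, g i ∂μ - ((∫ i, f i ∂μ) + 1) / 2 := by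
  have hf' : Integrable (fun i => (f i + 1) / 2) μ := (hf.add (integrable_const 1)).div_const 2
  rw [integral_sub hg hf', integral_div, integral_add hf (integrable_const 1), integral_const,
    probReal_univ, one_smul]

end

theorem multiaccuracy_forces_equal_cosine_general
    {E : Type*} [NormedAddCommGroup E] [InnerProductSpace ℝ E]
    [MeasurableSpace E] [BorelSpace E]
    {I : Type*} [MeasurableSpace I]
    (u : E)
    (e : I → E) (he : Measurable e) (heunit : ∀ i, ‖e i‖ = 1)
    (μ₁ μ₂ : Measure I) [IsProbabilityMeasure μ₁] [IsProbabilityMeasure μ₂]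
    (sStar : I → ℝ) (hsStar : Measurable sStar)
    (hsStar01 : ∀ i, sStar i ∈ Set.Icc (0 : ℝ) 1)
    (α : ℝ)
    (hma₁ : |∫ i, (sStar i - (⟪u, e i⟫ + 1) / 2) ∂μ₁| ≤ α)
    (hma₂ : |∫ i, (sStar i - (⟪u, e i⟫ + 1) / 2) ∂μ₂| ≤ α)
    (heq : ∫ i, sStar i ∂μ₁ = ∫ i, sStar i ∂μ₂) :
    |(∫ i, ⟪u, e i⟫ ∂μ₁) - ∫ i, ⟪u, e i⟫ ∂μ₂| ≤ 4 * α := by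
  have hcos (μ : Measure I) [IsProbabilityMeasure μ] : Integrable (fun i => ⟪u, e i⟫) μ :=
    integrable_inner_of_norm_le u he fun i => (heunit i).le
  have hs (μ : Measure I) [IsProbabilityMeasure μ] : Integrable sStar μ :=
    .of_mem_Icc 0 1 hsStar.aemeasurable (.of_forall hsStar01)
  rw [integral_sub_half_add_one (hs μ₁) (hcos μ₁)] at hma₁
  rw [integral_sub_half_add_one (hs μ₂) (hcos μ₂)] at hma₂
  rw [abs_le] at hma₁ hma₂ ⊢
  constructor <;> linarith

/-- **Theorem 5.3.** Let `u = e_P(b)` be the (unit) prompt embedding and `e = e_I`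
the image embedding into the unit sphere, and let `s(i) = (⟪u, e i⟫ + 1)/2` be the
derived auditing function. If `s` is `α`-multiaccurate on `μ₁, μ₂` (w.r.t. the true
alignment score `sStar`) and the two image distributions have equal average true
alignment, then their average cosine similarities to the prompt embedding differ
by at most `4α`. -/
theorem multiaccuracy_forces_equal_cosine
    {E : Type*} [NormedAddCommGroup E] [InnerProductSpace ℝ E]
    [MeasurableSpace E] [BorelSpace E]
    {I : Type*} [MeasurableSpace I]
    (u : E) (hu : ‖u‖ = 1)
    (e : I → E) (he : Measurable e) (heunit : ∀ i, ‖e i‖ = 1)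
    (μ₁ μ₂ : Measure I) [IsProbabilityMeasure μ₁] [IsProbabilityMeasure μ₂]
    (sStar : I → ℝ) (hsStar : Measurable sStar)
    (hsStar01 : ∀ i, sStar i ∈ Set.Icc (0 : ℝ) 1)
    (α : ℝ)
    (hma₁ : |∫ i, (sStar i - (⟪u, e i⟫ + 1) / 2) ∂μ₁| ≤ α)
    (hma₂ : |∫ i, (sStar i - (⟪u, e i⟫ + 1) / 2) ∂μ₂| ≤ α)
    (heq : ∫ i, sStar i ∂μ₁ = ∫ i, sStar i ∂μ₂) :
    |(∫ i, ⟪u, e i⟫ ∂μ₁) - ∫ i, ⟪u, e i⟫ ∂μ₂| ≤ 4 * α :=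
  multiaccuracy_forces_equal_cosine_general u e he heunit μ₁ μ₂ sStar hsStar hsStar01 α hma₁ hma₂
    heq
end

section
/- Let E be a real inner product space, let u ∈ E with ‖u‖ = 1 (the embedding e_P(b) of a base prompt b), and let v_1, v_2 ∈ E be unit vectors (the embeddings e_P(a_1 + b) and e_P(a_2 + b) of the prompt with attributes a_1, a_2 attached). Let e : I → E be a measurable map from a measurable space I into the unit sphere of E, and let μ_1, μ_2 be probability measures on I such that ‖e(i) − v_ℓ‖ ≤ ε holds μ_ℓ-almost everywhere for ℓ = 1, 2. Define s(i) = (⟪u, e(i)⟫ + 1)/2 and let s* : I → [0,1] be measurable. If |∫ (s* − s) dμ_ℓ| ≤ α for ℓ = 1, 2 and ∫ s* dμ_1 = ∫ s* dμ_2, then |⟪u, v_1⟫ − ⟪u, v_2⟫| ≤ 4α + 2ε. -/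
open MeasureTheory
open scoped RealInnerProductSpace

/-! Rescaled to `[0, 1]`, the alignment score `(⟪u, x⟫ + 1) / 2` is `1/2`-Lipschitz in `x`, so on
each `μ_ℓ` its mean is within `ε/2` of the score of `v_ℓ`; multiaccuracy puts that mean within `α`
of the mean of `s*`, which is the same for both measures. Chaining the four estimates bounds the
difference of the two scores by `2α + ε`, i.e. that of the inner products by `4α + 2ε`. -/

theorem norm_integral_sub_le_of_ae_norm_sub_le {α F : Type*} [MeasurableSpace α]
    [NormedAddCommGroup F] [NormedSpace ℝ F] [CompleteSpace F]
    {μ : Measure α} [IsProbabilityMeasure μ]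
    {f : α → F} {c : F} {δ : ℝ} (hf : Integrable f μ) (h : ∀ᵐ x ∂μ, ‖f x - c‖ ≤ δ) :
    ‖∫ x, f x ∂μ - c‖ ≤ δ := by
  have hsub : ∫ x, f x ∂μ - c = ∫ x, (f x - c) ∂μ := by
    rw [integral_sub hf (integrable_const c), integral_const, probReal_univ, one_smul]
  simpa [hsub, probReal_univ] using norm_integral_le_of_norm_le_const h

section AlignmentScore

variable {E : Type*} [NormedAddCommGroup E] [InnerProductSpace ℝ E]

noncomputable def alignmentScore (u x : E) : ℝ := (⟪u, x⟫ + 1) / 2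

theorem abs_alignmentScore_le_one {u x : E} (hu : ‖u‖ ≤ 1) (hx : ‖x‖ ≤ 1) :
    |alignmentScore u x| ≤ 1 := by
  have hinner : |⟪u, x⟫| ≤ 1 :=
    (abs_real_inner_le_norm u x).trans (mul_le_one₀ hu (norm_nonneg x) hx)
  rw [abs_le] at hinner ⊢
  rw [alignmentScore]
  constructor <;> linarith

theorem abs_alignmentScore_sub_le {u : E} (hu : ‖u‖ ≤ 1) (x y : E) :
    |alignmentScore u x - alignmentScore u y| ≤ ‖x - y‖ / 2 := by
  have hdiff : alignmentScore u x - alignmentScore u y = ⟪u, x - y⟫ / 2 := by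
    rw [alignmentScore, alignmentScore, inner_sub_right]
    ring
  rw [hdiff, abs_div, abs_two]
  gcongr
  calc |⟪u, x - y⟫| ≤ ‖u‖ * ‖x - y‖ := abs_real_inner_le_norm u (x - y)
    _ ≤ ‖x - y‖ := mul_le_of_le_one_left (norm_nonneg _) hu

theorem integrable_alignmentScore_comp [MeasurableSpace E] [BorelSpace E]
    {I : Type*} [MeasurableSpace I] {μ : Measure I} [IsFiniteMeasure μ]
    {u : E} (hu : ‖u‖ ≤ 1) {e : I → E} (he : Measurable e) (heunit : ∀ i, ‖e i‖ ≤ 1) :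
    Integrable (fun i => alignmentScore u (e i)) μ :=
  Integrable.of_bound ((((innerSL ℝ u).continuous.measurable.comp he).add_const 1).div_const 2
    |>.aestronglyMeasurable) 1 (.of_forall fun i => abs_alignmentScore_le_one hu (heunit i))

theorem abs_integral_alignmentScore_sub_le [MeasurableSpace E] [BorelSpace E]
    {I : Type*} [MeasurableSpace I] {μ : Measure I} [IsProbabilityMeasure μ]
    {u v : E} (hu : ‖u‖ ≤ 1) {e : I → E} (he : Measurable e) (heunit : ∀ i, ‖e i‖ ≤ 1)
    {ε : ℝ} (hball : ∀ᵐ i ∂μ, ‖e i - v‖ ≤ ε) :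
    |∫ i, alignmentScore u (e i) ∂μ - alignmentScore u v| ≤ ε / 2 := by
  refine norm_integral_sub_le_of_ae_norm_sub_le (integrable_alignmentScore_comp hu he heunit) ?_
  filter_upwards [hball] with i hi
  exact (abs_alignmentScore_sub_le hu (e i) v).trans (by linarith)

end AlignmentScore

theorem abs_sub_le_of_integral_sub_le {I : Type*} [MeasurableSpace I] {μ₁ μ₂ : Measure I}
    {s sStar : I → ℝ} (hs₁ : Integrable s μ₁) (hs₂ : Integrable s μ₂)
    (hsStar₁ : Integrable sStar μ₁) (hsStar₂ : Integrable sStar μ₂) {α δ c₁ c₂ : ℝ}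
    (hma₁ : |∫ i, (sStar i - s i) ∂μ₁| ≤ α) (hma₂ : |∫ i, (sStar i - s i) ∂μ₂| ≤ α)
    (heq : ∫ i, sStar i ∂μ₁ = ∫ i, sStar i ∂μ₂)
    (hclose₁ : |∫ i, s i ∂μ₁ - c₁| ≤ δ) (hclose₂ : |∫ i, s i ∂μ₂ - c₂| ≤ δ) :
    |c₁ - c₂| ≤ 2 * α + 2 * δ := by
  rw [integral_sub hsStar₁ hs₁] at hma₁
  rw [integral_sub hsStar₂ hs₂] at hma₂
  rw [abs_le] at *
  constructor <;> linarith

theorem multiaccuracy_forces_fair_prompt_embeddings_general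
    {E : Type*} [NormedAddCommGroup E] [InnerProductSpace ℝ E]
    [MeasurableSpace E] [BorelSpace E]
    {I : Type*} [MeasurableSpace I]
    (u : E) (hu : ‖u‖ = 1)
    (v₁ v₂ : E)
    (e : I → E) (he : Measurable e) (heunit : ∀ i, ‖e i‖ = 1)
    (μ₁ μ₂ : Measure I) [IsProbabilityMeasure μ₁] [IsProbabilityMeasure μ₂]
    (ε : ℝ)
    (hball₁ : ∀ᵐ i ∂μ₁, ‖e i - v₁‖ ≤ ε)
    (hball₂ : ∀ᵐ i ∂μ₂, ‖e i - v₂‖ ≤ ε)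
    (sStar : I → ℝ) (hsStar : Measurable sStar)
    (hsStar01 : ∀ i, sStar i ∈ Set.Icc (0 : ℝ) 1)
    (α : ℝ)
    (hma₁ : |∫ i, (sStar i - (⟪u, e i⟫ + 1) / 2) ∂μ₁| ≤ α)
    (hma₂ : |∫ i, (sStar i - (⟪u, e i⟫ + 1) / 2) ∂μ₂| ≤ α)
    (heq : ∫ i, sStar i ∂μ₁ = ∫ i, sStar i ∂μ₂) :
    |⟪u, v₁⟫ - ⟪u, v₂⟫| ≤ 4 * α + 2 * ε := by
  have heunit' : ∀ i, ‖e i‖ ≤ 1 := fun i => (heunit i).le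
  have hsStar_bound : ∀ i, ‖sStar i‖ ≤ 1 := fun i =>
    abs_le.mpr ⟨by linarith [(hsStar01 i).1], (hsStar01 i).2⟩
  have hsStar_int : ∀ (μ : Measure I) [IsFiniteMeasure μ], Integrable sStar μ := fun _ _ =>
    .of_bound hsStar.aestronglyMeasurable 1 (.of_forall hsStar_bound)
  have hscores := abs_sub_le_of_integral_sub_le
    (integrable_alignmentScore_comp hu.le he heunit')
    (integrable_alignmentScore_comp hu.le he heunit') (hsStar_int μ₁) (hsStar_int μ₂)
    hma₁ hma₂ heq (abs_integral_alignmentScore_sub_le hu.le he heunit' hball₁)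
    (abs_integral_alignmentScore_sub_le hu.le he heunit' hball₂)
  have hinner : ⟪u, v₁⟫ - ⟪u, v₂⟫ = 2 * (alignmentScore u v₁ - alignmentScore u v₂) := by
    simp only [alignmentScore]
    ring
  rw [hinner, abs_mul, abs_two]
  linarith

/-- **Theorem 5.4.** Let `u = e_P(b)` be the (unit) base prompt embedding, and let
`v₁, v₂` be the (unit) embeddings of the prompt with attributes `a₁, a₂` attached.
Suppose the image embeddings under `μ_ℓ` lie (a.e.) in an `ε`-ball around `v_ℓ`.
If the auditing function `s(i) = (⟪u, e i⟫ + 1)/2` is `α`-multiaccurate on `μ₁, μ₂`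
and the two image distributions have equal average true alignment, then the
attributed prompt embeddings are nearly equidistant (in cosine similarity) from the
base prompt embedding: `|⟪u, v₁⟫ − ⟪u, v₂⟫| ≤ 4α + 2ε`. -/
theorem multiaccuracy_forces_fair_prompt_embeddings
    {E : Type*} [NormedAddCommGroup E] [InnerProductSpace ℝ E]
    [MeasurableSpace E] [BorelSpace E]
    {I : Type*} [MeasurableSpace I]
    (u : E) (hu : ‖u‖ = 1)
    (v₁ v₂ : E) (hv₁ : ‖v₁‖ = 1) (hv₂ : ‖v₂‖ = 1)
    (e : I → E) (he : Measurable e) (heunit : ∀ i, ‖e i‖ = 1)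
    (μ₁ μ₂ : Measure I) [IsProbabilityMeasure μ₁] [IsProbabilityMeasure μ₂]
    (ε : ℝ)
    (hball₁ : ∀ᵐ i ∂μ₁, ‖e i - v₁‖ ≤ ε)
    (hball₂ : ∀ᵐ i ∂μ₂, ‖e i - v₂‖ ≤ ε)
    (sStar : I → ℝ) (hsStar : Measurable sStar)
    (hsStar01 : ∀ i, sStar i ∈ Set.Icc (0 : ℝ) 1)
    (α : ℝ)
    (hma₁ : |∫ i, (sStar i - (⟪u, e i⟫ + 1) / 2) ∂μ₁| ≤ α)
    (hma₂ : |∫ i, (sStar i - (⟪u, e i⟫ + 1) / 2) ∂μ₂| ≤ α)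
    (heq : ∫ i, sStar i ∂μ₁ = ∫ i, sStar i ∂μ₂) :
    |⟪u, v₁⟫ - ⟪u, v₂⟫| ≤ 4 * α + 2 * ε :=
  multiaccuracy_forces_fair_prompt_embeddings_general u hu v₁ v₂ e he heunit μ₁ μ₂ ε hball₁ hball₂
    sStar hsStar hsStar01 α hma₁ hma₂ heq
end
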